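/- arXiv:1605.00627 — 3 statements merged into one kernel-verified Lean document; each statement's English description precedes it below -/
import Mathlib

section
/- Let (Ω, μ) be a probability space, n a positive integer, A_c, A_o n×n real matrices, and P an n×n real symmetric matrix. Let ρ ∈ ℝ and θ ∈ [0,1] be such that ρ·P − θ·(A_cᵀ P A_c) − (1−θ)·(A_oᵀ P A_o) is positive semidefinite. Let x : Ω → ℝⁿ have square-integrable components, let γ : Ω → {0,1} be measurable with μ(γ = 1) = θ, and let w : Ω → ℝⁿ have square-integrable components with ∫ w_i dμ = 0 and covariance entries W_{ij} = ∫ w_i w_j dμ. Assume that the pair (γ, w) is independent of x, and that γ is independent of w. Then, writing A(ω) = A_c if γ(ω) = 1 and A(ω) = A_o otherwise, ∫ (A(ω)x(ω) + w(ω))ᵀ P (A(ω)x(ω) + w(ω)) dμ(ω) ≤ ρ · ∫ x(ω)ᵀ P x(ω) dμ(ω) + trace(P·W). -/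
/-!
Since `γ` is independent of `w` and `(γ, w)` of `x`, the three are mutually independent, so `γ` is
independent of `(w, x)`. Averaging over `γ` first turns the expectation into the convex combination,
with weights `θ` and `1 - θ`, of the expectations for the two fixed closed-loop matrices `A_c`, `A_o`.
For a fixed matrix `A`, expanding `(A x + w)ᵀ P (A x + w)` leaves `E[xᵀ AᵀPA x] + trace(P W)`: the
cross terms vanish because `w` is centred and independent of `x`. The LMI then bounds the remaining
quadratic form in `x` pointwise by `ρ xᵀ P x`.
-/

open Matrix MeasureTheory ProbabilityTheory

section Matrix

variable {m n : Type*} [Fintype m] [Fintype n]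

lemma mulVec_add_dotProduct_mulVec (A : Matrix m n ℝ) (P : Matrix m m ℝ) (u : n → ℝ)
    (v : m → ℝ) :
    (A *ᵥ u + v) ⬝ᵥ P *ᵥ (A *ᵥ u + v)
      = u ⬝ᵥ (Aᵀ * P * A) *ᵥ u + u ⬝ᵥ (Aᵀ * P) *ᵥ v + v ⬝ᵥ (P * A) *ᵥ u + v ⬝ᵥ P *ᵥ v := by
  have hA : ∀ y, (A *ᵥ u) ⬝ᵥ y = u ⬝ᵥ Aᵀ *ᵥ y := fun y => by
    rw [dotProduct_mulVec, vecMul_transpose]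
  simp only [mulVec_add, dotProduct_add, add_dotProduct, ← mulVec_mulVec, hA]
  ring

lemma dotProduct_mulVec_eq_sum (B : Matrix m n ℝ) (a : m → ℝ) (b : n → ℝ) :
    a ⬝ᵥ B *ᵥ b = ∑ i, ∑ k, B i k * (a i * b k) := by
  simp only [dotProduct, mulVec, Finset.mul_sum]
  exact Finset.sum_congr rfl fun i _ => Finset.sum_congr rfl fun k _ => by ring

lemma mul_dotProduct_mulVec_add_le_of_posSemidef {P M₁ M₂ : Matrix n n ℝ} {ρ a b : ℝ}
    (h : (ρ • P - a • M₁ - b • M₂).PosSemidef) (u : n → ℝ) :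
    a * (u ⬝ᵥ M₁ *ᵥ u) + b * (u ⬝ᵥ M₂ *ᵥ u) ≤ ρ * (u ⬝ᵥ P *ᵥ u) := by
  have hnonneg := h.dotProduct_mulVec_nonneg u
  simp only [star_trivial, sub_mulVec, smul_mulVec, dotProduct_sub, dotProduct_smul,
    smul_eq_mul] at hnonneg
  linarith

end Matrix

section Independence

variable {Ω : Type*} [MeasurableSpace Ω] {μ : Measure Ω} [IsProbabilityMeasure μ]

lemma indepFun_prodMk_of_indepFun {α β δ : Type*} [MeasurableSpace α]
    [MeasurableSpace β] [MeasurableSpace δ]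
    {X : Ω → α} {Y : Ω → β} {Z : Ω → δ}
    (hX : Measurable X) (hY : Measurable Y) (hZ : Measurable Z)
    (hXY_Z : IndepFun (fun ω => (X ω, Y ω)) Z μ) (hXY : IndepFun X Y μ) :
    IndepFun X (fun ω => (Y ω, Z ω)) μ := by
  have hYZ : IndepFun Y Z μ := hXY_Z.comp measurable_snd measurable_id
  rw [indepFun_iff_map_prod_eq_prod_map_map hX.aemeasurable (hY.prodMk hZ).aemeasurable,
    hYZ.map_prod_eq_prod_map_map hY.aemeasurable hZ.aemeasurable,
    ← Measure.prodAssoc_prod, ← hXY.map_prod_eq_prod_map_map hX.aemeasurable hY.aemeasurable,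
    ← hXY_Z.map_prod_eq_prod_map_map (hX.prodMk hY).aemeasurable hZ.aemeasurable,
    Measure.map_map MeasurableEquiv.prodAssoc.measurable ((hX.prodMk hY).prodMk hZ)]
  rfl

lemma integral_ite_of_indepFun {γ : Ω → Bool} {f g : Ω → ℝ}
    (hγ : Measurable γ) (hf : Integrable f μ) (hg : Integrable g μ)
    (hγf : IndepFun γ f μ) (hγg : IndepFun γ g μ) :
    ∫ ω, (if γ ω then f ω else g ω) ∂μ
      = μ.real {ω | γ ω = true} * ∫ ω, f ω ∂μ
        + (1 - μ.real {ω | γ ω = true}) * ∫ ω, g ω ∂μ := by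
  set S := {ω | γ ω = true}
  have hSγ : MeasurableSet[MeasurableSpace.comap γ inferInstance] S := ⟨{true}, trivial, rfl⟩
  have hS : MeasurableSet S := hγ.comap_le S hSγ
  have hite : ∀ ω, (if γ ω then f ω else g ω) = S.indicator f ω + Sᶜ.indicator g ω := by
    intro ω; by_cases h : γ ω <;> simp [S, h]
  have hfS : ∫ ω in S, f ω ∂μ = μ.real S * ∫ ω, f ω ∂μ :=
    Indep.setIntegral_eq_mul (f := id) hγ.comap_le hγf hf.aemeasurable hSγ
      measurable_id.aestronglyMeasurable
  have hgS : ∫ ω in Sᶜ, g ω ∂μ = μ.real Sᶜ * ∫ ω, g ω ∂μ :=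
    Indep.setIntegral_eq_mul (f := id) hγ.comap_le hγg hg.aemeasurable hSγ.compl
      measurable_id.aestronglyMeasurable
  simp only [hite]
  rw [integral_add (hf.indicator hS) (hg.indicator hS.compl), integral_indicator hS,
    integral_indicator hS.compl, hfS, hgS, probReal_compl_eq_one_sub hS]

end Independence

section Moments

variable {Ω : Type*} [MeasurableSpace Ω] {μ : Measure Ω} {m n : Type*} [Fintype n]
  {u : Ω → m → ℝ} {v : Ω → n → ℝ}

lemma memLp_mulVec_add {p : ENNReal} (A : Matrix m n ℝ) (hv : ∀ k, MemLp (fun ω => v ω k) p μ)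
    (hu : ∀ i, MemLp (fun ω => u ω i) p μ) (i : m) :
    MemLp (fun ω => (A *ᵥ v ω + u ω) i) p μ := by
  simp only [Pi.add_apply, mulVec, dotProduct]
  exact (memLp_finsetSum _ fun k _ => (hv k).const_mul (A i k)).add (hu i)

variable [Fintype m]

lemma integrable_dotProduct_mulVec (B : Matrix m n ℝ)
    (h : ∀ i k, Integrable (fun ω => u ω i * v ω k) μ) :
    Integrable (fun ω => u ω ⬝ᵥ B *ᵥ v ω) μ := by
  simp only [dotProduct_mulVec_eq_sum]
  exact integrable_finsetSum _ fun i _ => integrable_finsetSum _ fun k _ => (h i k).const_mul _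

lemma integrable_dotProduct_mulVec_of_memLp (B : Matrix m n ℝ)
    (hu : ∀ i, MemLp (fun ω => u ω i) 2 μ) (hv : ∀ k, MemLp (fun ω => v ω k) 2 μ) :
    Integrable (fun ω => u ω ⬝ᵥ B *ᵥ v ω) μ :=
  integrable_dotProduct_mulVec B fun i k => (hu i).integrable_mul (hv k)

lemma integral_dotProduct_mulVec (B : Matrix m n ℝ)
    (h : ∀ i k, Integrable (fun ω => u ω i * v ω k) μ) :
    ∫ ω, u ω ⬝ᵥ B *ᵥ v ω ∂μ = ∑ i, ∑ k, B i k * ∫ ω, u ω i * v ω k ∂μ := by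
  simp only [dotProduct_mulVec_eq_sum]
  rw [integral_finsetSum (f := fun i ω => ∑ k, B i k * (u ω i * v ω k)) _
    fun i _ => integrable_finsetSum _ fun k _ => (h i k).const_mul _]
  refine Finset.sum_congr rfl fun i _ => ?_
  rw [integral_finsetSum (f := fun k ω => B i k * (u ω i * v ω k)) _
    fun k _ => (h i k).const_mul _]
  simp only [integral_const_mul]

lemma integral_dotProduct_mulVec_of_indepFun (B : Matrix m n ℝ) (huv : IndepFun u v μ)
    (hu : ∀ i, Integrable (fun ω => u ω i) μ) (hv : ∀ k, Integrable (fun ω => v ω k) μ) :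
    ∫ ω, u ω ⬝ᵥ B *ᵥ v ω ∂μ = (fun i => ∫ ω, u ω i ∂μ) ⬝ᵥ B *ᵥ fun k => ∫ ω, v ω k ∂μ := by
  have huv' : ∀ i k, IndepFun (fun ω => u ω i) (fun ω => v ω k) μ := fun i k =>
    huv.comp (measurable_pi_apply i) (measurable_pi_apply k)
  rw [integral_dotProduct_mulVec B fun i k => (huv' i k).integrable_mul (hu i) (hv k),
    dotProduct_mulVec_eq_sum]
  simp only [fun i k => (huv' i k).integral_fun_mul_eq_mul_integral (hu i).1 (hv k).1]

lemma integral_mulVec_add_dotProduct_mulVec_of_indepFun [IsFiniteMeasure μ]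
    (A : Matrix m n ℝ) (P W : Matrix m m ℝ) {x : Ω → n → ℝ} {w : Ω → m → ℝ}
    (hx : ∀ i, MemLp (fun ω => x ω i) 2 μ) (hw : ∀ i, MemLp (fun ω => w ω i) 2 μ)
    (hxw : IndepFun x w μ) (hmean : ∀ i, ∫ ω, w ω i ∂μ = 0)
    (hW : ∀ i j, W i j = ∫ ω, w ω i * w ω j ∂μ) :
    ∫ ω, (A *ᵥ x ω + w ω) ⬝ᵥ P *ᵥ (A *ᵥ x ω + w ω) ∂μ
      = ∫ ω, x ω ⬝ᵥ (Aᵀ * P * A) *ᵥ x ω ∂μ + (P * W).trace := by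
  have hx1 : ∀ i, Integrable (fun ω => x ω i) μ := fun i => (hx i).integrable one_le_two
  have hw1 : ∀ i, Integrable (fun ω => w ω i) μ := fun i => (hw i).integrable one_le_two
  have h₁ := integrable_dotProduct_mulVec_of_memLp (Aᵀ * P * A) hx hx
  have h₂ := integrable_dotProduct_mulVec_of_memLp (Aᵀ * P) hx hw
  have h₃ := integrable_dotProduct_mulVec_of_memLp (P * A) hw hx
  have h₄ := integrable_dotProduct_mulVec_of_memLp P hw hw
  have hw0 : (fun i => ∫ ω, w ω i ∂μ) = 0 := funext hmean
  simp only [mulVec_add_dotProduct_mulVec]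
  rw [integral_add ((h₁.fun_add h₂).fun_add h₃) h₄, integral_add (h₁.fun_add h₂) h₃,
    integral_add h₁ h₂, integral_dotProduct_mulVec_of_indepFun _ hxw hx1 hw1,
    integral_dotProduct_mulVec_of_indepFun _ hxw.symm hw1 hx1, hw0,
    integral_dotProduct_mulVec _ fun i k => (hw i).integrable_mul (hw k)]
  simp [trace, mul_apply, hW, mul_comm (w _ _) (w _ _)]

end Moments

theorem stmt_4_general (Ω : Type*) [MeasurableSpace Ω] (μ : Measure Ω) [IsProbabilityMeasure μ]
    (n : ℕ) (Ac Ao P : Matrix (Fin n) (Fin n) ℝ)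
    (ρ θ : ℝ)
    (hLMI : (ρ • P - θ • (Acᵀ * P * Ac) - (1 - θ) • (Aoᵀ * P * Ao)).PosSemidef)
    (x : Ω → (Fin n → ℝ)) (hx : Measurable x)
    (hx2 : ∀ i, MemLp (fun ω => x ω i) 2 μ)
    (γ : Ω → Bool) (hγ : Measurable γ)
    (hθ : (μ {ω | γ ω = true}).toReal = θ)
    (w : Ω → (Fin n → ℝ)) (hw : Measurable w)
    (hw2 : ∀ i, MemLp (fun ω => w ω i) 2 μ)
    (hmean : ∀ i, ∫ ω, w ω i ∂μ = 0)
    (W : Matrix (Fin n) (Fin n) ℝ)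
    (hW : ∀ i j, W i j = ∫ ω, w ω i * w ω j ∂μ)
    (hindep_pair : IndepFun (fun ω => (γ ω, w ω)) x μ)
    (hindep : IndepFun γ w μ) :
    ∫ ω, ((if γ ω then Ac else Ao).mulVec (x ω) + w ω) ⬝ᵥ
          P.mulVec ((if γ ω then Ac else Ao).mulVec (x ω) + w ω) ∂μ
      ≤ ρ * ∫ ω, x ω ⬝ᵥ P.mulVec (x ω) ∂μ + (P * W).trace := by
  let F : Matrix (Fin n) (Fin n) ℝ → Ω → ℝ := fun A ω =>
    (A *ᵥ x ω + w ω) ⬝ᵥ P *ᵥ (A *ᵥ x ω + w ω)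
  have hγwx : IndepFun γ (fun ω => (w ω, x ω)) μ :=
    indepFun_prodMk_of_indepFun hγ hw hx hindep_pair hindep
  have hxw : IndepFun x w μ := (hindep_pair.comp measurable_snd measurable_id).symm
  have hF_int (A) : Integrable (F A) μ := integrable_dotProduct_mulVec_of_memLp P
    (memLp_mulVec_add A hx2 hw2) (memLp_mulVec_add A hx2 hw2)
  have hψ (A : Matrix (Fin n) (Fin n) ℝ) : Measurable fun p : (Fin n → ℝ) × (Fin n → ℝ) =>
      (A *ᵥ p.2 + p.1) ⬝ᵥ P *ᵥ (A *ᵥ p.2 + p.1) := by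
    fun_prop
  have hF_indep (A) : IndepFun γ (F A) μ := hγwx.comp measurable_id (hψ A)
  have hquad (M : Matrix (Fin n) (Fin n) ℝ) := integrable_dotProduct_mulVec_of_memLp M hx2 hx2
  calc _ = ∫ ω, (if γ ω then F Ac ω else F Ao ω) ∂μ := by
        congr 1; funext ω; cases γ ω <;> rfl
    _ = ∫ ω, θ * (x ω ⬝ᵥ (Acᵀ * P * Ac) *ᵥ x ω) + (1 - θ) * (x ω ⬝ᵥ (Aoᵀ * P * Ao) *ᵥ x ω) ∂μ
          + (P * W).trace := by
        rw [integral_ite_of_indepFun hγ (hF_int Ac) (hF_int Ao) (hF_indep Ac) (hF_indep Ao),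
          Measure.real, hθ,
          integral_mulVec_add_dotProduct_mulVec_of_indepFun Ac P W hx2 hw2 hxw hmean hW,
          integral_mulVec_add_dotProduct_mulVec_of_indepFun Ao P W hx2 hw2 hxw hmean hW,
          integral_add ((hquad _).const_mul θ) ((hquad _).const_mul (1 - θ)),
          integral_const_mul, integral_const_mul]
        ring
    _ ≤ ρ * ∫ ω, x ω ⬝ᵥ P *ᵥ x ω ∂μ + (P * W).trace := by
        rw [← integral_const_mul]
        exact add_le_add_left (integral_mono (((hquad _).const_mul θ).fun_add
          ((hquad _).const_mul (1 - θ))) ((hquad P).const_mul ρ)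
          fun ω => mul_dotProduct_mulVec_add_le_of_posSemidef hLMI (x ω)) _

/-- If `θ` satisfies the LMI
`ρ•P - θ•(A_cᵀPA_c) - (1-θ)•(A_oᵀPA_o) ⪰ 0`, then the one-step expected value of the
quadratic Lyapunov function of the switched system is bounded:
`E[(A x + w)ᵀ P (A x + w)] ≤ ρ · E[xᵀ P x] + trace(P·W)`. -/
theorem stmt_4 (Ω : Type*) [MeasurableSpace Ω] (μ : Measure Ω) [IsProbabilityMeasure μ]
    (n : ℕ) (hn : 0 < n) (Ac Ao P : Matrix (Fin n) (Fin n) ℝ) (hP : P.IsSymm)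
    (ρ θ : ℝ) (hθ0 : 0 ≤ θ) (hθ1 : θ ≤ 1)
    (hLMI : (ρ • P - θ • (Acᵀ * P * Ac) - (1 - θ) • (Aoᵀ * P * Ao)).PosSemidef)
    (x : Ω → (Fin n → ℝ)) (hx : Measurable x)
    (hx2 : ∀ i, MemLp (fun ω => x ω i) 2 μ)
    (γ : Ω → Bool) (hγ : Measurable γ)
    (hθ : (μ {ω | γ ω = true}).toReal = θ)
    (w : Ω → (Fin n → ℝ)) (hw : Measurable w)
    (hw2 : ∀ i, MemLp (fun ω => w ω i) 2 μ)
    (hmean : ∀ i, ∫ ω, w ω i ∂μ = 0)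
    (W : Matrix (Fin n) (Fin n) ℝ)
    (hW : ∀ i j, W i j = ∫ ω, w ω i * w ω j ∂μ)
    (hindep_pair : IndepFun (fun ω => (γ ω, w ω)) x μ)
    (hindep : IndepFun γ w μ) :
    ∫ ω, ((if γ ω then Ac else Ao).mulVec (x ω) + w ω) ⬝ᵥ
          P.mulVec ((if γ ω then Ac else Ao).mulVec (x ω) + w ω) ∂μ
      ≤ ρ * ∫ ω, x ω ⬝ᵥ P.mulVec (x ω) ∂μ + (P * W).trace :=
  stmt_4_general Ω μ n Ac Ao P ρ θ hLMI x hx hx2 γ hγ hθ w hw hw2 hmean W hW hindep_pair hindep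
end

section
/- Let (X, μ) be a measure space with μ a finite measure, and let f : X → ℝ be integrable with μ({h : f(h) = 0}) = 0. If a measurable function α : X → ℝ with 0 ≤ α(h) ≤ 1 for all h satisfies ∫ α(h)·f(h) dμ(h) = ∫ min(f(h), 0) dμ(h), then α(h) = 1_{{f < 0}}(h) for μ-almost every h, where 1_{{f < 0}} is the indicator function of the set {h : f(h) < 0}. -/
/-!
Since `0 ≤ α ≤ 1`, pointwise `min (f h) 0 ≤ α h * f h`. Equality of the integrals of two integrable
functions, one below the other, forces them to agree almost everywhere; and wherever `f h ≠ 0`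
(almost everywhere by assumption), `α h * f h = min (f h) 0` pins `α h` down to `1` if `f h < 0`
and to `0` if `f h > 0`.
-/

open MeasureTheory

lemma min_zero_le_mul_of_nonneg_of_le_one {a x : ℝ} (ha0 : 0 ≤ a) (ha1 : a ≤ 1) :
    min x 0 ≤ a * x := by
  rcases le_total 0 x with hx | hx
  · rw [min_eq_right hx]
    positivity
  · rw [min_eq_left hx]
    nlinarith

lemma eq_indicator_neg_of_min_zero_eq_mul {a x : ℝ} (hx : x ≠ 0) (h : min x 0 = a * x) :
    a = Set.indicator {y : ℝ | y < 0} (fun _ => 1) x := by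
  rcases hx.lt_or_gt with hneg | hpos
  · rw [min_eq_left hneg.le] at h
    rw [Set.indicator_of_mem (show x ∈ {y : ℝ | y < 0} from hneg)]
    exact mul_right_cancel₀ hx (by rw [← h, one_mul])
  · rw [min_eq_right hpos.le] at h
    rw [Set.indicator_of_notMem (show x ∉ {y : ℝ | y < 0} from not_lt.2 hpos.le)]
    exact (mul_eq_zero.1 h.symm).resolve_right hx

theorem stmt_7_general (X : Type*) [MeasurableSpace X] (μ : Measure X)
    (f : X → ℝ) (hf : Integrable f μ) (hzero : μ {h | f h = 0} = 0)
    (α : X → ℝ) (hα : Measurable α) (hα0 : ∀ h, 0 ≤ α h) (hα1 : ∀ h, α h ≤ 1)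
    (heq : ∫ h, α h * f h ∂μ = ∫ h, min (f h) 0 ∂μ) :
    ∀ᵐ h ∂μ, α h = Set.indicator {h | f h < 0} (fun _ => (1 : ℝ)) h := by
  have hαf : Integrable (fun h => α h * f h) μ :=
    hf.bdd_mul hα.aestronglyMeasurable (c := 1) <| ae_of_all _ fun h => by
      rw [Real.norm_eq_abs, abs_of_nonneg (hα0 h)]
      exact hα1 h
  have hmin : Integrable (fun h => min (f h) 0) μ := hf.inf (integrable_zero X ℝ μ)
  have hle : (fun h => min (f h) 0) ≤ᵐ[μ] fun h => α h * f h :=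
    ae_of_all _ fun h => min_zero_le_mul_of_nonneg_of_le_one (hα0 h) (hα1 h)
  have hae := (integral_eq_iff_of_ae_le hmin hαf hle).1 heq.symm
  have hfne : ∀ᵐ h ∂μ, f h ≠ 0 := measure_eq_zero_iff_ae_notMem.1 hzero
  filter_upwards [hae, hfne] with h hmul hfh
  exact eq_indicator_neg_of_min_zero_eq_mul hfh hmul

/-- If `μ({f = 0}) = 0` and a measurable `α : X → [0,1]` achieves
`∫ α·f dμ = ∫ min(f,0) dμ`, then `α` equals the indicator of `{f < 0}` μ-a.e. -/
theorem stmt_7 (X : Type*) [MeasurableSpace X] (μ : Measure X) [IsFiniteMeasure μ]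
    (f : X → ℝ) (hf : Integrable f μ) (hzero : μ {h | f h = 0} = 0)
    (α : X → ℝ) (hα : Measurable α) (hα0 : ∀ h, 0 ≤ α h) (hα1 : ∀ h, α h ≤ 1)
    (heq : ∫ h, α h * f h ∂μ = ∫ h, min (f h) 0 ∂μ) :
    ∀ᵐ h ∂μ, α h = Set.indicator {h | f h < 0} (fun _ => (1 : ℝ)) h :=
  stmt_7_general X μ f hf hzero α hα hα0 hα1 heq
end

section
/- Let μ be a probability measure on ℝ with no atoms (μ({x}) = 0 for all x), let q : ℝ → ℝ be strictly increasing, continuous, and taking values in [0,1], and let ν > 0, p > 0, s ≥ 0 be real numbers. Define α* : ℝ → ℝ by α*(h) = 1 if ν·q(h) ≥ p + s and α*(h) = 0 otherwise. Then: (i) for every measurable α : ℝ → ℝ with 0 ≤ α(h) ≤ 1 for all h, ∫ α*(h)·(p + s − ν·q(h)) dμ(h) ≤ ∫ α(h)·(p + s − ν·q(h)) dμ(h); (ii) if a measurable α : ℝ → [0,1] attains equality in (i), then α(h) = α*(h) for μ-almost every h. -/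
open MeasureTheory

/-!
The Lagrangian integrand `α(h) · c(h)`, with `c = p + s - ν q`, is minimised pointwise over
`α(h) ∈ [0,1]` by taking `α(h) = 1` exactly where `c(h) ≤ 0`; integrating gives (i). In the
equality case the nonnegative gap between the two integrands integrates to zero, so `α = α*`
wherever `c ≠ 0`. Since `q` is injective and `ν ≠ 0`, the set `{c = 0}` has at most one point,
which is `μ`-null because `μ` has no atoms.
-/

section ThresholdPolicy

variable {X : Type*} [MeasurableSpace X] {μ : Measure X} {c α : X → ℝ}

lemma ite_nonpos_mul_le {a t : ℝ} (ht0 : 0 ≤ t) (ht1 : t ≤ 1) :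
    (if a ≤ 0 then (1 : ℝ) else 0) * a ≤ t * a := by
  split_ifs with ha
  · nlinarith
  · rw [zero_mul]
    exact mul_nonneg ht0 (le_of_not_ge ha)

lemma MeasureTheory.Integrable.mul_of_mem_Icc (hc : Integrable c μ) (hα : AEStronglyMeasurable α μ)
    (h0 : ∀ x, 0 ≤ α x) (h1 : ∀ x, α x ≤ 1) : Integrable (fun x => α x * c x) μ :=
  hc.bdd_mul hα (c := 1) <| ae_of_all _ fun x => by
    rw [Real.norm_eq_abs, abs_le]
    exact ⟨by linarith [h0 x], h1 x⟩

lemma integrable_ite_nonpos_mul (hc : Integrable c μ) (hcm : Measurable c) :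
    Integrable (fun x => (if c x ≤ 0 then (1 : ℝ) else 0) * c x) μ :=
  hc.mul_of_mem_Icc
    (Measurable.ite (measurableSet_le hcm measurable_const) measurable_const
      measurable_const).aestronglyMeasurable
    (fun x => by split_ifs <;> norm_num) (fun x => by split_ifs <;> norm_num)

lemma integral_ite_nonpos_mul_le (hc : Integrable c μ) (hcm : Measurable c)
    (hα : AEStronglyMeasurable α μ) (h0 : ∀ x, 0 ≤ α x) (h1 : ∀ x, α x ≤ 1) :
    ∫ x, (if c x ≤ 0 then (1 : ℝ) else 0) * c x ∂μ ≤ ∫ x, α x * c x ∂μ :=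
  integral_mono (integrable_ite_nonpos_mul hc hcm) (hc.mul_of_mem_Icc hα h0 h1)
    fun x => ite_nonpos_mul_le (h0 x) (h1 x)

lemma ae_eq_ite_nonpos_of_integral_eq (hc : Integrable c μ) (hcm : Measurable c)
    (hc0 : ∀ᵐ x ∂μ, c x ≠ 0) (hα : AEStronglyMeasurable α μ) (h0 : ∀ x, 0 ≤ α x)
    (h1 : ∀ x, α x ≤ 1)
    (heq : ∫ x, α x * c x ∂μ = ∫ x, (if c x ≤ 0 then (1 : ℝ) else 0) * c x ∂μ) :
    ∀ᵐ x ∂μ, α x = if c x ≤ 0 then (1 : ℝ) else 0 := by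
  have hgap := (integral_eq_iff_of_ae_le (integrable_ite_nonpos_mul hc hcm)
    (hc.mul_of_mem_Icc hα h0 h1) (ae_of_all _ fun x => ite_nonpos_mul_le (h0 x) (h1 x))).mp
    heq.symm
  filter_upwards [hgap, hc0] with x hx hcx
  exact (mul_right_cancel₀ hcx hx).symm

end ThresholdPolicy

lemma ae_ne_of_injective {X Y : Type*} [MeasurableSpace X] (μ : Measure X)
    [NullSingletonClass μ] {f : X → Y} (hf : Function.Injective f) (y : Y) :
    ∀ᵐ x ∂μ, f x ≠ y :=
  measure_eq_zero_iff_ae_notMem.mp ((Set.subsingleton_singleton.preimage hf).measure_zero μ)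

theorem stmt_9_general (μ : Measure ℝ) [IsProbabilityMeasure μ]
    (hatom : ∀ x : ℝ, μ {x} = 0)
    (q : ℝ → ℝ) (hq : StrictMono q)
    (hq01 : ∀ h, q h ∈ Set.Icc (0 : ℝ) 1)
    (ν p s : ℝ) (hν : 0 < ν) :
    (∀ α : ℝ → ℝ, Measurable α → (∀ h, 0 ≤ α h) → (∀ h, α h ≤ 1) →
      ∫ h, (if p + s ≤ ν * q h then (1 : ℝ) else 0) * (p + s - ν * q h) ∂μ ≤
        ∫ h, α h * (p + s - ν * q h) ∂μ) ∧
    (∀ α : ℝ → ℝ, Measurable α → (∀ h, 0 ≤ α h) → (∀ h, α h ≤ 1) →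
      (∫ h, α h * (p + s - ν * q h) ∂μ =
        ∫ h, (if p + s ≤ ν * q h then (1 : ℝ) else 0) * (p + s - ν * q h) ∂μ) →
      ∀ᵐ h ∂μ, α h = if p + s ≤ ν * q h then (1 : ℝ) else 0) := by
  have : NullSingletonClass μ := ⟨hatom⟩
  set c : ℝ → ℝ := fun h => p + s - ν * q h with hc
  have hcond : ∀ h, (p + s ≤ ν * q h) = (c h ≤ 0) := fun h => propext sub_nonpos.symm
  simp only [hcond]
  have hcm : Measurable c := measurable_const.sub (hq.monotone.measurable.const_mul ν)
  have hci : Integrable c μ := Integrable.of_bound hcm.aestronglyMeasurable (|p + s| + ν) <|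
    ae_of_all _ fun h => by
      obtain ⟨hq0, hq1⟩ := hq01 h
      have hνq : ν * q h ≤ ν := mul_le_of_le_one_right hν.le hq1
      rw [Real.norm_eq_abs, abs_le]
      constructor <;> nlinarith [le_abs_self (p + s), neg_abs_le (p + s)]
  have hc0 : ∀ᵐ h ∂μ, c h ≠ 0 := ae_ne_of_injective μ
    (fun a b hab => hq.injective (mul_left_cancel₀ hν.ne' (by simpa [hc] using hab))) 0
  exact ⟨fun α hα h0 h1 => integral_ite_nonpos_mul_le hci hcm hα.aestronglyMeasurable h0 h1,
    fun α hα h0 h1 => ae_eq_ite_nonpos_of_integral_eq hci hcm hc0 hα.aestronglyMeasurable h0 h1⟩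

/-- Lemma 1 for a single sensor. The threshold policy
`α*(h) = 1` if `ν·q(h) ≥ p + s`, else `0`, (i) minimizes the Lagrangian term
`∫ α(h)·(p + s - ν·q(h)) dμ` over measurable `α : ℝ → [0,1]`, and (ii) any such
minimizer coincides with `α*` μ-almost everywhere. -/
theorem stmt_9 (μ : Measure ℝ) [IsProbabilityMeasure μ]
    (hatom : ∀ x : ℝ, μ {x} = 0)
    (q : ℝ → ℝ) (hq : StrictMono q) (hqc : Continuous q)
    (hq01 : ∀ h, q h ∈ Set.Icc (0 : ℝ) 1)
    (ν p s : ℝ) (hν : 0 < ν) (hp : 0 < p) (hs : 0 ≤ s) :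
    (∀ α : ℝ → ℝ, Measurable α → (∀ h, 0 ≤ α h) → (∀ h, α h ≤ 1) →
      ∫ h, (if p + s ≤ ν * q h then (1 : ℝ) else 0) * (p + s - ν * q h) ∂μ ≤
        ∫ h, α h * (p + s - ν * q h) ∂μ) ∧
    (∀ α : ℝ → ℝ, Measurable α → (∀ h, 0 ≤ α h) → (∀ h, α h ≤ 1) →
      (∫ h, α h * (p + s - ν * q h) ∂μ =
        ∫ h, (if p + s ≤ ν * q h then (1 : ℝ) else 0) * (p + s - ν * q h) ∂μ) →
      ∀ᵐ h ∂μ, α h = if p + s ≤ ν * q h then (1 : ℝ) else 0) :=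
  stmt_9_general μ hatom q hq hq01 ν p s hν
end
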